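/- Let π = (p_1,...,p_n) be a sequence of distinct keys avoiding the pattern (3,1,2) (i.e., there are no indices i < j < k with p_j < p_k < p_i). For every i with 2 ≤ i ≤ n, letting M = max{p_1,...,p_{i−1}}, one of the following holds: (a) p_i > M and p_i is the unique sub-root at time i whose key is greater than M, or (b) p_i is the largest sub-root at time i whose key is smaller than M. -/

import Mathlib

/-- Binary trees with keys at internal nodes. -/
inductive BT (α : Type) where
  | leaf : BT α
  | node : BT α → α → BT α → BT α
deriving DecidableEq

namespace BT

variable {α : Type} [LinearOrder α]

/-- The list of keys of a tree, in symmetric (inorder) order. -/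
def keys : BT α → List α
  | leaf => []
  | node l v r => keys l ++ v :: keys r

/-- The number of nodes of a tree. -/
def size : BT α → ℕ
  | leaf => 0
  | node l _ r => size l + size r + 1

/-- The symmetric-order (binary search tree) property. -/
def IsBST : BT α → Prop
  | leaf => True
  | node l v r => (∀ x ∈ l.keys, x < v) ∧ (∀ x ∈ r.keys, v < x) ∧ l.IsBST ∧ r.IsBST

/-- Preorder of a binary tree: root, then left subtree, then right subtree. -/
def preorder : BT α → List α
  | leaf => []
  | node l v r => v :: (preorder l ++ preorder r)

/-- Postorder of a binary tree: left subtree, right subtree, then root. -/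
def postorder : BT α → List α
  | leaf => []
  | node l v r => postorder l ++ postorder r ++ [v]

/-- Reversed preorder: root, then right subtree, then left subtree
(the preorder of the mirror image). -/
def revPreorder : BT α → List α
  | leaf => []
  | node l v r => v :: (revPreorder r ++ revPreorder l)

/-- Standard leaf insertion into a binary search tree. -/
def insertKey : BT α → α → BT α
  | leaf, x => node leaf x leaf
  | node l v r, x =>
    if x < v then node (insertKey l x) v r
    else if v < x then node l v (insertKey r x)
    else node l v r

/-- The depth (number of edges from the root) of the node with key `x`,
located by binary search. -/
def depthOf : BT α → α → ℕ
  | leaf, _ => 0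
  | node l v r, x =>
    if x < v then depthOf l x + 1
    else if v < x then depthOf r x + 1
    else 0

/-- The search path to the key `x`: `false` records a step to a left child,
`true` a step to a right child. -/
def pathTo : BT α → α → List Bool
  | leaf, _ => []
  | node l v r, x =>
    if x < v then false :: pathTo l x
    else if v < x then true :: pathTo r x
    else []

/-- The left-depth of the node with key `x`: the number of left-child edges
on the path from the root to it. -/
def leftDepthKey : BT α → α → ℕ
  | leaf, _ => 0
  | node l v r, x =>
    if x < v then leftDepthKey l x + 1
    else if v < x then leftDepthKey r x
    else 0

/-- The subtree rooted at the node with key `x` (empty if `x` is absent). -/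
def subtreeAt : BT α → α → BT α
  | leaf, _ => leaf
  | node l v r, x =>
    if x < v then subtreeAt l x
    else if v < x then subtreeAt r x
    else node l v r

/-- The key at the root, if any. -/
def rootKey : BT α → Option α
  | leaf => none
  | node _ v _ => some v

/-- The key of the parent of the node with key `x`, if any. -/
def parentKey : BT α → α → Option α
  | leaf, _ => none
  | node l v r, x =>
    if x < v then (if l.rootKey = some x then some v else l.parentKey x)
    else if v < x then (if r.rootKey = some x then some v else r.parentKey x)
    else none

/-- A step of the context (zipper) describing the search path from the root
to the current subtree: `inL v r` means the current subtree is the left child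
of a node with key `v` and right subtree `r`; `inR l v` means it is the right
child of a node with key `v` and left subtree `l`. -/
inductive Ctx (α : Type) where
  | inL : α → BT α → Ctx α
  | inR : BT α → α → Ctx α

/-- Descend along the search path for `x`, recording the context.
The head of the returned list corresponds to the immediate parent. -/
def descend : BT α → α → List (Ctx α) → List (Ctx α) × BT α
  | leaf, _, acc => (acc, leaf)
  | node l v r, x, acc =>
    if x < v then descend l x (Ctx.inL v r :: acc)
    else if v < x then descend r x (Ctx.inR l v :: acc)
    else (acc, node l v r)

/-- Reattach a subtree into its context, with no rotations. -/
def rebuild : BT α → List (Ctx α) → BT α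
  | t, [] => t
  | t, Ctx.inL v r :: cs => rebuild (node t v r) cs
  | t, Ctx.inR l v :: cs => rebuild (node l v t) cs

/-- Bottom-up splay steps: repeatedly apply zig / zig-zig / zig-zag steps to
the current subtree (rooted at the node being splayed) until the context is
exhausted. -/
def splayLoop : BT α → List (Ctx α) → BT α
  | t, [] => t
  | node a x b, [Ctx.inL v r] => node a x (node b v r)          -- zig
  | node a x b, [Ctx.inR l v] => node (node l v a) x b          -- zig
  | node a x b, Ctx.inL p pr :: Ctx.inL g gr :: cs =>           -- zig-zig
      splayLoop (node a x (node b p (node pr g gr))) cs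
  | node a x b, Ctx.inL p pr :: Ctx.inR gl g :: cs =>           -- zig-zag
      splayLoop (node (node gl g a) x (node b p pr)) cs
  | node a x b, Ctx.inR pl p :: Ctx.inR gl g :: cs =>           -- zig-zig
      splayLoop (node (node (node gl g pl) p a) x b) cs
  | node a x b, Ctx.inR pl p :: Ctx.inL g gr :: cs =>           -- zig-zag
      splayLoop (node (node pl p a) x (node b g gr)) cs
  | leaf, cs => rebuild leaf cs   -- unreachable when the splayed key is present

/-- Splaying the key `x`: if `x` occurs in the tree, bring its node to the
root by bottom-up splay steps; otherwise leave the tree unchanged. -/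
def splay (x : α) (t : BT α) : BT α :=
  match descend t x [] with
  | (_, leaf) => t
  | (cs, found) => splayLoop found cs

/-- `α`-weight-balance in the sense of Nievergelt–Reingold:
at each node, `min(|L|,|R|) + 1 ≥ α * (|x| + 1)`. -/
def WeightBalanced (a : ℝ) : BT α → Prop
  | leaf => True
  | node l _ r =>
      (min l.size r.size + 1 : ℝ) ≥ a * ((l.size + r.size + 1 : ℕ) + 1 : ℝ) ∧
      WeightBalanced a l ∧ WeightBalanced a r

/-- The rank of `x` in `t`: the number of keys of `t` that are `≤ x`. -/
def rank (t : BT α) (x : α) : ℕ := (t.keys.filter (fun y => y ≤ x)).length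

end BT

section Defs

variable {α : Type} [LinearOrder α]

/-- The insertion tree of a sequence: leaf-insert the keys in order. -/
def bstOf (π : List α) : BT α := π.foldl BT.insertKey BT.leaf

/-- `q` is a sub-root: a node of `t` not yet touched whose parent is touched,
where `touched` is the list of touched keys. -/
def IsSubRoot (t : BT α) (touched : List α) (q : α) : Prop :=
  q ∈ t.keys ∧ q ∉ touched ∧ ∃ p, t.parentKey q = some p ∧ p ∈ touched

/-- π avoids the pattern (2,3,1). -/
def Avoids231 (π : List α) : Prop :=
  ¬ ∃ i j k : Fin π.length, i < j ∧ j < k ∧ π.get k < π.get i ∧ π.get i < π.get j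

/-- π avoids the pattern (3,1,2). -/
def Avoids312 (π : List α) : Prop :=
  ¬ ∃ i j k : Fin π.length, i < j ∧ j < k ∧ π.get j < π.get k ∧ π.get k < π.get i

/-- π avoids the pattern (2,1,3). -/
def Avoids213 (π : List α) : Prop :=
  ¬ ∃ i j k : Fin π.length, i < j ∧ j < k ∧ π.get j < π.get i ∧ π.get i < π.get k

/-- π contains a strictly decreasing subsequence of length `k`. -/
def HasDecreasingSubseq (π : List α) (k : ℕ) : Prop :=
  ∃ s : List α, s.Sublist π ∧ s.length = k ∧ s.Chain' (· > ·)

/-- Splay the keys of a list in order, starting from `t`. -/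
def splaySeq (π : List α) (t : BT α) : BT α := π.foldl (fun s x => BT.splay x s) t

/-- The cost of splaying a sequence of keys starting from `t`:
each splay costs the current depth of the requested key plus one. -/
def splayCost : BT α → List α → ℕ
  | _, [] => 0
  | t, x :: xs => (t.depthOf x + 1) + splayCost (BT.splay x t) xs

/-- The cost of insertion splaying a sequence of keys starting from `t`:
each key is leaf-inserted, then the new node is splayed, at a cost of
its depth after insertion plus one. -/
def insertSplayCost : BT α → List α → ℕ
  | _, [] => 0
  | t, x :: xs =>
    ((t.insertKey x).depthOf x + 1) + insertSplayCost (BT.splay x (t.insertKey x)) xs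

/-- `DF rk xs` = Σ_{i≥2} log₂(|rk(x_i) − rk(x_{i−1})| + 1). -/
noncomputable def DF (rk : α → ℕ) (xs : List α) : ℝ :=
  ((xs.zip xs.tail).map
    (fun p => Real.logb 2 (|(rk p.2 : ℝ) - (rk p.1 : ℝ)| + 1))).sum

/-- The rank of `x` within the sequence `σ` itself. -/
def rankIn (σ : List α) (x : α) : ℕ := (σ.filter (fun y => y ≤ x)).length

/-- The dynamic-finger sum of a sequence, with ranks computed in the
sequence itself. -/
noncomputable def DFseq (σ : List α) : ℝ := DF (rankIn σ) σ

end Defs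

/-! If `π_i` exceeds the maximum `M` of the earlier keys, the search for any key `q > M`
runs down the right spine of the current tree to `M` and then through `π_i`; later
insertions only extend search paths, so the parent of `q ≠ π_i` lies in the right subtree
of `M`, is larger than `M`, and hence untouched. If `π_i < M`, an untouched key `q` with
`π_i < q < M` is inserted after `π_i`, and `M, π_i, q` is an occurrence of `(3,1,2)`.
In both cases `π_i` is a sub-root because its parent is fixed at its insertion. -/

namespace BT

variable {α : Type} [LinearOrder α]

/-- The keys met by binary search for `q`, from the root down; when `q` is a key of a BST,
these are the keys of the strict ancestors of its node. -/
def searchPath : BT α → α → List α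
  | leaf, _ => []
  | node l v r, q =>
    if q < v then v :: searchPath l q
    else if v < q then v :: searchPath r q
    else []

theorem mem_keys_insertKey {t : BT α} {y a : α} :
    a ∈ (t.insertKey y).keys ↔ a = y ∨ a ∈ t.keys := by
  induction t with
  | leaf => simp [insertKey, keys]
  | node l v r ihl ihr =>
    simp only [insertKey]
    split_ifs with h₁ h₂
    · simp only [keys, List.mem_append, List.mem_cons, ihl]; tauto
    · simp only [keys, List.mem_append, List.mem_cons, ihr]; tauto
    · obtain rfl : y = v := le_antisymm (not_lt.1 h₂) (not_lt.1 h₁)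
      simp only [keys, List.mem_append, List.mem_cons]; tauto

theorem isBST_insertKey {t : BT α} (h : t.IsBST) (y : α) : (t.insertKey y).IsBST := by
  induction t with
  | leaf => simp [insertKey, IsBST, keys]
  | node l v r ihl ihr =>
    obtain ⟨hl, hr, hbl, hbr⟩ := h
    simp only [insertKey]
    split_ifs with h₁ h₂
    · refine ⟨fun k hk => ?_, hr, ihl hbl, hbr⟩
      rcases mem_keys_insertKey.1 hk with rfl | hk
      exacts [h₁, hl k hk]
    · refine ⟨hl, fun k hk => ?_, hbl, ihr hbr⟩
      rcases mem_keys_insertKey.1 hk with rfl | hk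
      exacts [h₂, hr k hk]
    · exact ⟨hl, hr, hbl, hbr⟩

theorem mem_keys_left_of_lt {l r : BT α} {v x : α} (h : (node l v r).IsBST)
    (hx : x ∈ (node l v r).keys) (hxv : x < v) : x ∈ l.keys := by
  simp only [keys, List.mem_append, List.mem_cons] at hx
  rcases hx with hx | rfl | hx
  · exact hx
  · exact absurd hxv (lt_irrefl x)
  · exact absurd (h.2.1 x hx) hxv.not_gt

theorem mem_keys_right_of_lt {l r : BT α} {v x : α} (h : (node l v r).IsBST)
    (hx : x ∈ (node l v r).keys) (hvx : v < x) : x ∈ r.keys := by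
  simp only [keys, List.mem_append, List.mem_cons] at hx
  rcases hx with hx | rfl | hx
  · exact absurd (h.1 x hx) hvx.not_gt
  · exact absurd hvx (lt_irrefl x)
  · exact hx

theorem mem_keys_of_mem_searchPath {t : BT α} {q b : α} (h : b ∈ t.searchPath q) :
    b ∈ t.keys := by
  induction t with
  | leaf => simp [searchPath] at h
  | node l v r ihl ihr =>
    simp only [searchPath] at h
    split_ifs at h
    · rcases List.mem_cons.1 h with rfl | h <;> simp [keys, *]
    · rcases List.mem_cons.1 h with rfl | h <;> simp [keys, *]
    · simp at h

theorem searchPath_ne_nil {t : BT α} {v x : α} (hv : v ∈ t.keys) (hx : x ∉ t.keys) :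
    t.searchPath x ≠ [] := by
  cases t with
  | leaf => simp [keys] at hv
  | node l w r =>
    have hxw : x ≠ w := fun h => hx (by simp [keys, h])
    rcases hxw.lt_or_gt with h | h <;> simp [searchPath, h, h.not_gt]

theorem searchPath_insertKey_self (t : BT α) (y : α) :
    (t.insertKey y).searchPath y = t.searchPath y := by
  induction t with
  | leaf => simp [insertKey, searchPath]
  | node l v r ihl ihr =>
    simp only [insertKey]
    split_ifs with h₁ h₂ <;> simp [searchPath, *]

theorem searchPath_insertKey_of_mem {t : BT α} (h : t.IsBST) {x : α} (hx : x ∈ t.keys)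
    (y : α) : (t.insertKey y).searchPath x = t.searchPath x := by
  induction t with
  | leaf => simp [keys] at hx
  | node l v r ihl ihr =>
    rcases lt_trichotomy x v with hxv | rfl | hvx
    · have := ihl h.2.2.1 (mem_keys_left_of_lt h hx hxv)
      simp only [insertKey]
      split_ifs <;> simp [searchPath, hxv, this]
    · simp only [insertKey]
      split_ifs <;> simp [searchPath]
    · have := ihr h.2.2.2 (mem_keys_right_of_lt h hx hvx)
      simp only [insertKey]
      split_ifs <;> simp [searchPath, hvx, hvx.not_gt, this]

theorem searchPath_prefix_insertKey (t : BT α) (y q : α) :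
    t.searchPath q <+: (t.insertKey y).searchPath q := by
  induction t with
  | leaf => exact List.nil_prefix
  | node l v r ihl ihr =>
    simp only [insertKey]
    split_ifs <;> simp [searchPath] <;> split_ifs <;> simp [ihl, ihr]

theorem searchPath_insertKey_of_forall_lt {t : BT α} {y q : α} (hy : ∀ k ∈ t.keys, k < y)
    (hq : ∀ k ∈ t.keys, k < q) (hqy : q ≠ y) :
    (t.insertKey y).searchPath q = t.searchPath q ++ [y] := by
  induction t with
  | leaf => rcases hqy.lt_or_gt with h | h <;> simp [insertKey, searchPath, h, h.not_gt]
  | node l v r ihl ihr =>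
    have hvy : v < y := hy v (by simp [keys])
    have hvq : v < q := hq v (by simp [keys])
    simp [insertKey, searchPath, hvy, hvy.not_gt, hvq, hvq.not_gt,
      ihr (fun k hk => hy k (by simp [keys, hk])) (fun k hk => hq k (by simp [keys, hk]))]

theorem getLast?_searchPath_of_forall_le {t : BT α} (h : t.IsBST) {M q : α} (hM : M ∈ t.keys)
    (hk : ∀ k ∈ t.keys, k ≤ M) (hMq : M < q) : (t.searchPath q).getLast? = some M := by
  induction t with
  | leaf => simp [keys] at hM
  | node l v r ihl ihr =>
    have hvq : v < q := (hk v (by simp [keys])).trans_lt hMq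
    simp only [searchPath, hvq.not_gt, hvq, if_false, if_true]
    cases r with
    | leaf =>
      have hvM : v = M := by
        simp only [keys, List.mem_append, List.mem_cons] at hM
        rcases hM with hM | rfl | hM
        · exact absurd (h.1 M hM) (hk v (by simp [keys])).not_gt
        · rfl
        · simp at hM
      simp [searchPath, hvM]
    | node rl rv rr =>
      have hvM : v < M := h.2.1 rv (by simp [keys]) |>.trans_le (hk rv (by simp [keys]))
      rw [List.getLast?_cons, ihr h.2.2.2 (mem_keys_right_of_lt h hM hvM)
        (fun k hk' => hk k (List.mem_append_right _ (List.mem_cons_of_mem _ hk')))]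
      simp

theorem lt_of_mem_searchPath_of_lt {t : BT α} (h : t.IsBST) {q a b : α} {L₁ L₂ : List α}
    (hpath : t.searchPath q = L₁ ++ a :: L₂) (haq : a < q) (hb : b ∈ L₂) : a < b := by
  induction t generalizing L₁ with
  | leaf => simp [searchPath] at hpath
  | node l v r ihl ihr =>
    simp only [searchPath] at hpath
    split_ifs at hpath with hqv hvq
    · cases L₁ with
      | nil => exact absurd (haq.trans hqv) (by simp_all)
      | cons c L₁ => exact ihl h.2.2.1 (List.cons.inj hpath).2
    · cases L₁ with
      | nil =>
        obtain ⟨rfl, rfl⟩ := List.cons.inj hpath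
        exact h.2.1 b (mem_keys_of_mem_searchPath hb)
      | cons c L₁ => exact ihr h.2.2.2 (List.cons.inj hpath).2
    · simp at hpath

theorem getLast?_cons_searchPath {s : BT α} {v x : α} (hx : x ∈ s.keys) :
    (v :: s.searchPath x).getLast? =
      if s.rootKey = some x then some v else (s.searchPath x).getLast? := by
  cases s with
  | leaf => simp [keys] at hx
  | node l w r =>
    by_cases hw : w = x
    · simp [searchPath, rootKey, hw]
    · rcases (Ne.symm hw).lt_or_gt with h | h <;>
        simp [searchPath, rootKey, hw, h, h.not_gt]

theorem parentKey_eq_getLast?_searchPath {t : BT α} (h : t.IsBST) {x : α} (hx : x ∈ t.keys) :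
    t.parentKey x = (t.searchPath x).getLast? := by
  induction t with
  | leaf => simp [keys] at hx
  | node l v r ihl ihr =>
    rcases lt_trichotomy x v with hxv | rfl | hvx
    · have hxl := mem_keys_left_of_lt h hx hxv
      simp only [parentKey, searchPath, if_pos hxv, getLast?_cons_searchPath hxl,
        ihl h.2.2.1 hxl]
    · simp [parentKey, searchPath]
    · have hxr := mem_keys_right_of_lt h hx hvx
      simp only [parentKey, searchPath, hvx.not_gt, hvx, if_false, if_true,
        getLast?_cons_searchPath hxr, ihr h.2.2.2 hxr]

theorem mem_keys_foldl_insertKey {t : BT α} {l : List α} {a : α} :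
    a ∈ (l.foldl insertKey t).keys ↔ a ∈ t.keys ∨ a ∈ l := by
  induction l generalizing t with
  | nil => simp
  | cons y l ih =>
    simp only [List.foldl_cons, ih, mem_keys_insertKey, List.mem_cons]
    tauto

theorem isBST_foldl_insertKey {t : BT α} (h : t.IsBST) (l : List α) :
    (l.foldl insertKey t).IsBST := by
  induction l generalizing t with
  | nil => exact h
  | cons y l ih => exact ih (isBST_insertKey h y)

theorem searchPath_foldl_insertKey_of_mem {t : BT α} (h : t.IsBST) {x : α} (hx : x ∈ t.keys)
    (l : List α) : (l.foldl insertKey t).searchPath x = t.searchPath x := by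
  induction l generalizing t with
  | nil => rfl
  | cons y l ih =>
    rw [List.foldl_cons, ih (isBST_insertKey h y) (mem_keys_insertKey.2 (Or.inr hx)),
      searchPath_insertKey_of_mem h hx]

theorem searchPath_prefix_foldl_insertKey (t : BT α) (q : α) (l : List α) :
    t.searchPath q <+: (l.foldl insertKey t).searchPath q := by
  induction l generalizing t with
  | nil => exact List.prefix_rfl
  | cons y l ih => exact (searchPath_prefix_insertKey t y q).trans (ih _)

end BT

section InsertionTree

variable {α : Type} [LinearOrder α]

theorem mem_keys_bstOf {π : List α} {a : α} : a ∈ (bstOf π).keys ↔ a ∈ π := by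
  simp [bstOf, BT.mem_keys_foldl_insertKey, BT.keys]

theorem isBST_bstOf (π : List α) : (bstOf π).IsBST :=
  BT.isBST_foldl_insertKey (t := .leaf) trivial π

theorem bstOf_append (l₁ l₂ : List α) : bstOf (l₁ ++ l₂) = l₂.foldl BT.insertKey (bstOf l₁) :=
  List.foldl_append

theorem isSubRoot_bstOf_append {l₁ l₂ : List α} {x : α} (hl₁ : l₁ ≠ []) (hx : x ∉ l₁) :
    IsSubRoot (bstOf (l₁ ++ x :: l₂)) l₁ x := by
  set t := bstOf l₁
  have hxT : x ∈ (bstOf (l₁ ++ x :: l₂)).keys := mem_keys_bstOf.2 (by simp)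
  have hpath : (bstOf (l₁ ++ x :: l₂)).searchPath x = t.searchPath x := by
    rw [bstOf_append, List.foldl_cons, BT.searchPath_foldl_insertKey_of_mem
      (BT.isBST_insertKey (isBST_bstOf l₁) x) (BT.mem_keys_insertKey.2 (Or.inl rfl)),
      BT.searchPath_insertKey_self]
  obtain ⟨v, hv⟩ := List.exists_mem_of_ne_nil l₁ hl₁
  obtain ⟨p, hp⟩ := Option.ne_none_iff_exists'.1 <| List.getLast?_eq_none_iff.not.2 <|
    BT.searchPath_ne_nil (mem_keys_bstOf.2 hv) (mt mem_keys_bstOf.1 hx)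
  refine ⟨hxT, hx, p, ?_, ?_⟩
  · rw [BT.parentKey_eq_getLast?_searchPath (isBST_bstOf _) hxT, hpath, hp]
  · exact mem_keys_bstOf.1 (BT.mem_keys_of_mem_searchPath (List.mem_of_getLast? hp))

theorem eq_of_isSubRoot_of_forall_le_of_lt {l₁ l₂ : List α} {x M q : α} (hM : M ∈ l₁)
    (hmax : ∀ k ∈ l₁, k ≤ M) (hMx : M < x) (hq : IsSubRoot (bstOf (l₁ ++ x :: l₂)) l₁ q)
    (hMq : M < q) : q = x := by
  by_contra hqx
  obtain ⟨hqT, -, p, hp, hpl₁⟩ := hq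
  set t := bstOf l₁
  have hkeys : ∀ k ∈ t.keys, k ≤ M := fun k hk => hmax k (mem_keys_bstOf.1 hk)
  obtain ⟨L, hL⟩ := List.getLast?_eq_some_iff.1 <|
    BT.getLast?_searchPath_of_forall_le (isBST_bstOf l₁) (mem_keys_bstOf.2 hM) hkeys hMq
  obtain ⟨L', hL'⟩ : ∃ L', (bstOf (l₁ ++ x :: l₂)).searchPath q = L ++ M :: x :: L' := by
    obtain ⟨L', hL'⟩ := BT.searchPath_prefix_foldl_insertKey (t.insertKey x) q l₂
    refine ⟨L', ?_⟩
    rw [bstOf_append, List.foldl_cons, ← hL', BT.searchPath_insertKey_of_forall_lt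
      (fun k hk => (hkeys k hk).trans_lt hMx) (fun k hk => (hkeys k hk).trans_lt hMq) hqx, hL]
    simp
  have hpx : p ∈ x :: L' := by
    rw [BT.parentKey_eq_getLast?_searchPath (isBST_bstOf _) hqT, hL',
      List.getLast?_append_cons] at hp
    exact List.mem_of_getLast? hp
  exact (hmax p hpl₁).not_gt (BT.lt_of_mem_searchPath_of_lt (isBST_bstOf _) hL' hMq hpx)

theorem Avoids312.le_of_sublist {π : List α} (hav : Avoids312 π) {a b c : α}
    (hs : [a, b, c].Sublist π) (hca : c < a) : c ≤ b := by
  by_contra! hbc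
  obtain ⟨f, hf⟩ := List.sublist_iff_exists_fin_orderEmbedding_get_eq.1 hs
  exact hav ⟨f 0, f 1, f 2, f.strictMono (show (0 : Fin 3) < 1 by decide),
    f.strictMono (show (1 : Fin 3) < 2 by decide),
    by rw [← hf, ← hf]; exact hbc, by rw [← hf, ← hf]; exact hca⟩

theorem le_of_isSubRoot_of_avoids312 {l₁ l₂ : List α} {x M q : α}
    (hav : Avoids312 (l₁ ++ x :: l₂)) (hM : M ∈ l₁)
    (hq : IsSubRoot (bstOf (l₁ ++ x :: l₂)) l₁ q) (hqM : q < M) : q ≤ x := by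
  obtain ⟨hqT, hql₁, -⟩ := hq
  rcases eq_or_ne q x with rfl | hqx
  · exact le_rfl
  have hql₂ : q ∈ l₂ := by simpa [hql₁, hqx] using mem_keys_bstOf.1 hqT
  exact hav.le_of_sublist ((List.singleton_sublist.2 hM).append
    ((List.singleton_sublist.2 hql₂).cons_cons x)) hqM

end InsertionTree

theorem subroot_cases_of_avoids312_general {α : Type} [LinearOrder α]
    (π : List α) (hnd : π.Nodup) (hav : Avoids312 π)
    (i : Fin π.length) (M : α)
    (hM : M ∈ π.take i.val) (hMmax : ∀ q ∈ π.take i.val, q ≤ M) :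
    (M < π.get i ∧ IsSubRoot (bstOf π) (π.take i.val) (π.get i) ∧
       ∀ q, IsSubRoot (bstOf π) (π.take i.val) q → M < q → q = π.get i) ∨
    (π.get i < M ∧ IsSubRoot (bstOf π) (π.take i.val) (π.get i) ∧
       ∀ q, IsSubRoot (bstOf π) (π.take i.val) q → q < M → q ≤ π.get i) := by
  have hsplit : π = π.take i ++ π.get i :: π.drop (i + 1) := by
    rw [List.get_eq_getElem, List.getElem_cons_drop, List.take_append_drop]
  rw [hsplit] at hnd hav
  rw [congrArg bstOf hsplit]
  have hx : π.get i ∉ π.take i := fun h =>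
    (List.nodup_append.1 hnd).2.2 _ h _ List.mem_cons_self rfl
  have hsub := isSubRoot_bstOf_append (l₂ := π.drop (i + 1)) (List.ne_nil_of_mem hM) hx
  rcases lt_trichotomy M (π.get i) with hMx | rfl | hxM
  · exact Or.inl ⟨hMx, hsub, fun q hq => eq_of_isSubRoot_of_forall_le_of_lt hM hMmax hMx hq⟩
  · exact absurd hM hx
  · exact Or.inr ⟨hxM, hsub, fun q hq => le_of_isSubRoot_of_avoids312 hav hM hq⟩

/-- For a (3,1,2)-avoiding sequence of distinct keys, each key after the first
is, at the time of its insertion, either (a) greater than the maximum `M` of the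
inserted prefix and the unique sub-root greater than `M`, or (b) the largest
sub-root smaller than `M`. -/
theorem subroot_cases_of_avoids312 {α : Type} [LinearOrder α]
    (π : List α) (hnd : π.Nodup) (hav : Avoids312 π)
    (i : Fin π.length) (hi : 1 ≤ i.val) (M : α)
    (hM : M ∈ π.take i.val) (hMmax : ∀ q ∈ π.take i.val, q ≤ M) :
    (M < π.get i ∧ IsSubRoot (bstOf π) (π.take i.val) (π.get i) ∧
       ∀ q, IsSubRoot (bstOf π) (π.take i.val) q → M < q → q = π.get i) ∨
    (π.get i < M ∧ IsSubRoot (bstOf π) (π.take i.val) (π.get i) ∧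
       ∀ q, IsSubRoot (bstOf π) (π.take i.val) q → q < M → q ≤ π.get i) :=
  subroot_cases_of_avoids312_general π hnd hav i M hM hMmax
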